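/- Let φ(κ) = (1 − 2κ + √(1 − 8κ))/2 for κ ∈ (0, 1/8), and define H(κ) = (1 + κ − φ(κ)) / ( 2 √( (1 + κ) φ(κ) ) ). Then H is strictly increasing on (0, 1/8), lim_{κ→0⁺} H(κ) = 0, and lim_{κ→(1/8)⁻} H(κ) = 1/√3. In particular, 0 < H(κ) < 1/√3 for all κ ∈ (0, 1/8). -/
import Mathlib
open Set Filter

noncomputable def Gfun (s : ℝ) : ℝ := (1 - s) / Real.sqrt ((3 - s) * (1 + s))

lemma Gden_pos {s : ℝ} (h0 : 0 ≤ s) (h1 : s ≤ 1) :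
    0 < Real.sqrt ((3 - s) * (1 + s)) :=
  Real.sqrt_pos.2 (by nlinarith)

lemma G_anti {a b : ℝ} (hb : 0 ≤ b) (hba : b < a) (ha : a ≤ 1) :
    Gfun a < Gfun b := by
  have hb1 : b ≤ 1 := le_of_lt (lt_of_lt_of_le hba ha)
  have ha0 : 0 ≤ a := le_trans hb (le_of_lt hba)
  have hDa := Gden_pos ha0 ha
  have hDb := Gden_pos hb hb1
  rw [Gfun, Gfun, div_lt_div_iff₀ hDa hDb]
  have hnn : 0 ≤ (1 - b) * Real.sqrt ((3 - a) * (1 + a)) := by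
    have : 0 ≤ 1 - b := by linarith
    positivity
  refine lt_of_pow_lt_pow_left₀ 2 hnn ?_
  rw [mul_pow, mul_pow, Real.sq_sqrt (by nlinarith), Real.sq_sqrt (by nlinarith)]
  nlinarith [sq_nonneg (1 - a), sq_nonneg (1 - b), sq_nonneg (a - b),
    mul_pos (sub_pos.2 hba) (sub_pos.2 (lt_of_lt_of_le hba ha : b < 1))]

lemma H_eq_G {κ : ℝ} (h0 : 0 < κ) (h1 : κ < 1 / 8) :
    (1 + κ - (1 - 2 * κ + Real.sqrt (1 - 8 * κ)) / 2) /
      (2 * Real.sqrt ((1 + κ) * ((1 - 2 * κ + Real.sqrt (1 - 8 * κ)) / 2)))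
      = Gfun (Real.sqrt (1 - 8 * κ)) := by
  set s := Real.sqrt (1 - 8 * κ) with hsdef
  have hs2 : s ^ 2 = 1 - 8 * κ := Real.sq_sqrt (by linarith)
  have hs0 : 0 ≤ s := Real.sqrt_nonneg _
  have hs1 : s < 1 := by nlinarith
  have hκ : κ = (1 - s ^ 2) / 8 := by linarith
  have hprod : (1 + κ) * ((1 - 2 * κ + s) / 2)
      = ((3 + s) / 8) ^ 2 * ((3 - s) * (1 + s)) := by rw [hκ]; ring
  have hsq : Real.sqrt ((1 + κ) * ((1 - 2 * κ + s) / 2))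
      = ((3 + s) / 8) * Real.sqrt ((3 - s) * (1 + s)) := by
    rw [hprod, Real.sqrt_mul (sq_nonneg _), Real.sqrt_sq (by linarith)]
  have hD := Gden_pos hs0 (le_of_lt hs1)
  rw [Gfun, hsq, div_eq_div_iff (by positivity) (ne_of_gt hD), hκ]
  ring

lemma sqrt_mem {κ : ℝ} (h0 : 0 < κ) (h1 : κ < 1 / 8) :
    0 < Real.sqrt (1 - 8 * κ) ∧ Real.sqrt (1 - 8 * κ) < 1 := by
  constructor
  · exact Real.sqrt_pos.2 (by linarith)
  · have h := Real.sq_sqrt (show (0:ℝ) ≤ 1 - 8 * κ by linarith)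
    nlinarith [Real.sqrt_nonneg (1 - 8 * κ)]

/-- **Monotonicity of `h⁻(𝑣̲)` in `κ` for the Hill-type model**: with
`φ(κ) = (1 − 2κ + √(1−8κ))/2` and
`H(κ) = (1 + κ − φ(κ))/(2√((1+κ)φ(κ)))`, the function `H` is strictly
increasing on `(0, 1/8)`, `H(κ) → 0` as `κ → 0⁺`, `H(κ) → 1/√3` as
`κ → (1/8)⁻`, and `0 < H(κ) < 1/√3` on `(0, 1/8)`. -/
theorem hill_hminus_monotone
    (φ H : ℝ → ℝ)
    (hφ : ∀ κ, φ κ = (1 - 2 * κ + Real.sqrt (1 - 8 * κ)) / 2)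
    (hH : ∀ κ, H κ = (1 + κ - φ κ) / (2 * Real.sqrt ((1 + κ) * φ κ))) :
    StrictMonoOn H (Ioo 0 (1 / 8)) ∧
    Tendsto H (nhdsWithin 0 (Ioi 0)) (nhds 0) ∧
    Tendsto H (nhdsWithin (1 / 8) (Iio (1 / 8))) (nhds (1 / Real.sqrt 3)) ∧
    ∀ κ ∈ Ioo (0:ℝ) (1 / 8), 0 < H κ ∧ H κ < 1 / Real.sqrt 3 := by
  have hHG : ∀ κ ∈ Ioo (0:ℝ) (1 / 8), H κ = Gfun (Real.sqrt (1 - 8 * κ)) := by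
    intro κ hκ
    rw [hH, hφ]
    exact H_eq_G hκ.1 hκ.2
  -- continuity of Gfun where the denominator is nonzero
  have hGcont : ∀ s₀ : ℝ, 0 ≤ s₀ → s₀ ≤ 1 → ContinuousAt Gfun s₀ := by
    intro s₀ h0 h1
    apply ContinuousAt.div
    · fun_prop
    · exact (Real.continuous_sqrt.comp (by fun_prop)).continuousAt
    · exact ne_of_gt (Gden_pos h0 h1)
  have hscont : Continuous fun κ : ℝ => Real.sqrt (1 - 8 * κ) := by
    exact Real.continuous_sqrt.comp (by fun_prop)
  have hG1 : Gfun 1 = 0 := by simp [Gfun]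
  have hG0 : Gfun 0 = 1 / Real.sqrt 3 := by norm_num [Gfun]
  refine ⟨?_, ?_, ?_, ?_⟩
  · intro a ha b hb hab
    rw [hHG a ha, hHG b hb]
    have hsa := sqrt_mem ha.1 ha.2
    have hsb := sqrt_mem hb.1 hb.2
    have : Real.sqrt (1 - 8 * a) > Real.sqrt (1 - 8 * b) := by
      apply Real.sqrt_lt_sqrt (by linarith [hb.2]) (by linarith)
    exact G_anti (le_of_lt hsb.1) this (le_of_lt hsa.2)
  · have hmem : Ioo (0:ℝ) (1 / 8) ∈ nhdsWithin (0:ℝ) (Ioi 0) := by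
      rw [← Ioi_inter_Iio]
      exact inter_mem self_mem_nhdsWithin
        (mem_nhdsWithin_of_mem_nhds (Iio_mem_nhds (by norm_num)))
    have hs : Tendsto (fun κ : ℝ => Real.sqrt (1 - 8 * κ))
        (nhdsWithin 0 (Ioi 0)) (nhds 1) := by
      have := hscont.continuousAt (x := 0)
      simpa using this.tendsto.mono_left nhdsWithin_le_nhds
    have := ((hGcont 1 zero_le_one le_rfl).tendsto.comp hs)
    rw [hG1] at this
    exact this.congr' (by filter_upwards [hmem] with κ hκ using (hHG κ hκ).symm)
  · have hmem : Ioo (0:ℝ) (1 / 8) ∈ nhdsWithin (1/8:ℝ) (Iio (1/8)) := by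
      rw [← Ioi_inter_Iio]
      exact inter_mem
        (mem_nhdsWithin_of_mem_nhds (Ioi_mem_nhds (by norm_num))) self_mem_nhdsWithin
    have hs : Tendsto (fun κ : ℝ => Real.sqrt (1 - 8 * κ))
        (nhdsWithin (1/8) (Iio (1/8))) (nhds 0) := by
      have := hscont.continuousAt (x := (1/8:ℝ))
      have h2 : Real.sqrt (1 - 8 * (1/8:ℝ)) = 0 := by norm_num
      rw [ContinuousAt, h2] at this
      exact this.mono_left nhdsWithin_le_nhds
    have := ((hGcont 0 le_rfl zero_le_one).tendsto.comp hs)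
    rw [hG0] at this
    exact this.congr' (by filter_upwards [hmem] with κ hκ using (hHG κ hκ).symm)
  · intro κ hκ
    rw [hHG κ hκ]
    have hs := sqrt_mem hκ.1 hκ.2
    constructor
    · rw [Gfun]
      exact div_pos (by linarith [hs.2]) (Gden_pos (le_of_lt hs.1) (le_of_lt hs.2))
    · rw [← hG0]
      exact G_anti le_rfl hs.1 (le_of_lt hs.2)
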